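/- Let w be a word over Σ with ι(w) ≥ 1. The map s ↦ r(w^s) is eventually constant if and only if the map s ↦ ι(w^s) − ι(w^{s−1}) is eventually constant. -/

import Mathlib

open List

variable {α : Type*}

/-- `w` is `k`-universal: every word of length `k` over the alphabet `α`
is a scattered factor (subsequence) of `w`. -/
def IsUniversal [Fintype α] (k : ℕ) (w : List α) : Prop :=
  ∀ u : List α, u.length = k → u.Sublist w

/-- The universality index `ι(w)`: the largest `k` such that `w` is `k`-universal. -/
noncomputable def univIndex [Fintype α] (w : List α) : ℕ :=
  sSup {k | IsUniversal k w}

/-- The circular universality index `ζ(w)`: the largest `k` such that some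
conjugate of `w` is `k`-universal. -/
noncomputable def circIndex [Fintype α] (w : List α) : ℕ :=
  sSup {k | ∃ u v : List α, w = u ++ v ∧ IsUniversal k (v ++ u)}

/-- `wpow w s = w^s`, the `s`-fold concatenation of `w`. -/
def wpow (w : List α) (s : ℕ) : List α := (List.replicate s w).flatten

/-- Auxiliary (fuelled) computation of the remainder of the arch factorisation:
greedily remove the shortest prefix containing every letter of the alphabet. -/
def remAux [Fintype α] [DecidableEq α] : ℕ → List α → List α
  | 0, w => w
  | (n+1), w =>
    match (List.range' 1 w.length).find?
        (fun m => decide ((w.take m).toFinset = Finset.univ)) with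
    | none => w
    | some m => remAux n (w.drop m)

/-- `rem w = r(w)`, the remainder of the arch factorisation of `w`. -/
def rem [Fintype α] [DecidableEq α] (w : List α) : List α := remAux w.length w

/-- Auxiliary (fuelled) computation of the list of arches of `w`. -/
def archesAux [Fintype α] [DecidableEq α] : ℕ → List α → List (List α)
  | 0, _ => []
  | (n+1), w =>
    match (List.range' 1 w.length).find?
        (fun m => decide ((w.take m).toFinset = Finset.univ)) with
    | none => []
    | some m => (w.take m) :: archesAux n (w.drop m)

/-- `arches w`: the list `[arch₁(w), …, arch_{ι(w)}(w)]` of arches of `w`. -/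
def arches [Fintype α] [DecidableEq α] (w : List α) : List (List α) :=
  archesAux w.length w


/-!
The arches of `x ++ y` are those of `x` followed by those of `r(x) y`. Hence
`r(w^{s+1}) = r(r(w^s) w)` and `ι(w^{s+1}) - ι(w^s) = ι(r(w^s) w)`, so constant remainders give
constant growth. Conversely, every `r(w^s)` is a suffix of `w`, and if `u` is a suffix of `v` with
`ι(u) = ι(v)` then `r(u)` is a suffix of `r(v)`. So once `ι(r(w^s) w)` is constant, the step
`r(w^s) ↦ r(w^{s+1})` is monotone on the finite chain of suffixes of `w`; the remainders then
form a monotone sequence in that chain, which must stabilise.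
-/

theorem List.toFinset_eq_univ_of_subset [Fintype α] [DecidableEq α] {u v : List α} (h : u ⊆ v)
    (hu : u.toFinset = Finset.univ) : v.toFinset = Finset.univ :=
  Finset.eq_univ_of_forall fun c => mem_toFinset.2 (h (mem_toFinset.1 (hu ▸ Finset.mem_univ c)))

theorem List.toFinset_nil_ne_univ [Fintype α] [DecidableEq α] [Nonempty α] :
    ([] : List α).toFinset ≠ Finset.univ :=
  fun h => Finset.univ_nonempty.ne_empty h.symm

theorem List.cons_sublist_of_cons_sublist_append {x : α} {u p v : List α} (hx : x ∉ p)
    (h : x :: u <+ p ++ v) : x :: u <+ v := by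
  obtain ⟨_ | ⟨c, l₁⟩, l₂, he, h₁, h₂⟩ := sublist_append_iff.mp h
  · rwa [he]
  · obtain ⟨rfl, -⟩ := cons_eq_cons.mp he
    exact absurd (h₁.subset mem_cons_self) hx

theorem Nat.exists_eventually_const_of_le_imp_le_succ {f : ℕ → ℕ} {B t₀ : ℕ}
    (hB : ∀ s, f s ≤ B)
    (hf : ∀ s s', t₀ ≤ s → t₀ ≤ s' → f s ≤ f s' → f (s + 1) ≤ f (s' + 1)) :
    ∃ s₁, ∀ s, s₁ ≤ s → f s = f s₁ := by
  suffices ∃ n, ∀ m, n ≤ m → f (t₀ + n) = f (t₀ + m) by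
    obtain ⟨n, hn⟩ := this
    refine ⟨t₀ + n, fun s hs => ?_⟩
    simpa [Nat.add_sub_cancel' (by omega : t₀ ≤ s)] using (hn (s - t₀) (by omega)).symm
  rcases le_total (f t₀) (f (t₀ + 1)) with h | h
  · have hmono : Monotone fun n => f (t₀ + n) := monotone_nat_of_le_succ fun n => by
      induction n with
      | zero => exact h
      | succ n ih => exact hf (t₀ + n) (t₀ + (n + 1)) (by omega) (by omega) ih
    -- `B - f` is antitone, and determines `f` since `f ≤ B`
    obtain ⟨n, hn⟩ := WellFoundedLT.antitone_chain_condition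
      (f := fun n => B - f (t₀ + n)) fun a b hab => Nat.sub_le_sub_left (hmono hab) B
    refine ⟨n, fun m hm => ?_⟩
    have := hn m hm
    have := hB (t₀ + n)
    have := hB (t₀ + m)
    omega
  · refine WellFoundedLT.antitone_chain_condition (antitone_nat_of_succ_le fun n => ?_)
    induction n with
    | zero => exact h
    | succ n ih => exact hf (t₀ + (n + 1)) (t₀ + n) (by omega) (by omega) ih

theorem IsUniversal.mono [Fintype α] {w : List α} {j k : ℕ} (hk : IsUniversal k w) (hjk : j ≤ k) :
    IsUniversal j w := by
  rintro (_ | ⟨c, u⟩) hu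
  · exact nil_sublist w
  · -- pad `c :: u` on the left up to length `k`
    refine (sublist_append_right (replicate (k - j) c) _).trans (hk _ ?_)
    simp only [length_append, length_replicate, length_cons] at hu ⊢
    omega

theorem univIndex_eq_zero_of_isEmpty [Fintype α] [IsEmpty α] (w : List α) : univIndex w = 0 := by
  have huniv : {k | IsUniversal k w} = Set.univ := by
    refine Set.eq_univ_of_forall fun k => ?_
    rintro (_ | ⟨c, _⟩) _
    · exact nil_sublist w
    · exact isEmptyElim c
  rw [univIndex, huniv, csSup_of_not_bddAbove not_bddAbove_univ, csSup_empty]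
  rfl

theorem nonempty_of_univIndex_pos [Fintype α] {w : List α} (hw : 0 < univIndex w) :
    Nonempty α := by
  by_contra hα
  rw [not_nonempty_iff] at hα
  exact hw.ne' (univIndex_eq_zero_of_isEmpty w)

theorem IsUniversal.toFinset_eq_univ [Fintype α] [DecidableEq α] {w : List α} {k : ℕ}
    (h : IsUniversal k w) (hk : 0 < k) : w.toFinset = Finset.univ :=
  Finset.eq_univ_of_forall fun c => mem_toFinset.2 (singleton_sublist.1 (h.mono hk [c] rfl))

section ArchFactorization

variable [Fintype α] [DecidableEq α]

/-- The arch factorisation `w = l₁ ⋯ lₖ r`: each arch is a shortest prefix of the rest containing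
every letter, and `r` misses a letter. -/
inductive IsArchFactorization : List α → List (List α) → List α → Prop
  | nil {r : List α} (hr : r.toFinset ≠ Finset.univ) : IsArchFactorization r [] r
  | cons {a v : List α} {l : List (List α)} {r : List α} (ha : a.toFinset = Finset.univ)
      (ha' : a.dropLast.toFinset ≠ Finset.univ) (h : IsArchFactorization v l r) :
      IsArchFactorization (a ++ v) (a :: l) r

theorem isArchFactorization_archesAux [Nonempty α] :
    ∀ n (w : List α), w.length ≤ n → IsArchFactorization w (archesAux n w) (remAux n w)
  | 0, w, hw => by
    rw [length_eq_zero_iff.mp (Nat.le_zero.mp hw)]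
    exact .nil toFinset_nil_ne_univ
  | n + 1, w, hw => by
    rw [archesAux, remAux]
    cases hfind : (range' 1 w.length).find?
        (fun m => decide ((w.take m).toFinset = Finset.univ)) with
    | none =>
      refine .nil fun hw => ?_
      rcases eq_or_ne w [] with rfl | hne
      · exact toFinset_nil_ne_univ hw
      · simp only [find?_range'_eq_none, Bool.not_eq_true', decide_eq_false_iff_not] at hfind
        exact hfind w.length (length_pos_iff.mpr hne) (by omega) (by rwa [take_length])
    | some m =>
      simp only [find?_range'_eq_some, mem_range'_1, decide_eq_true_eq, Bool.not_eq_true',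
        decide_eq_false_iff_not] at hfind
      obtain ⟨hfull, ⟨hm, hmw⟩, hmin⟩ := hfind
      have hdrop : (w.take m).dropLast.toFinset ≠ Finset.univ := by
        rw [dropLast_eq_take, take_take, length_take, Nat.min_eq_left (by omega),
          Nat.min_eq_left (by omega)]
        rcases Nat.eq_zero_or_pos (m - 1) with h0 | hpos
        · rw [h0, take_zero]
          exact toFinset_nil_ne_univ
        · exact hmin (m - 1) hpos (by omega)
      have h := IsArchFactorization.cons hfull hdrop
        (isArchFactorization_archesAux n (w.drop m) (by rw [length_drop]; omega))
      rwa [take_append_drop] at h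

theorem isArchFactorization_arches [Nonempty α] (w : List α) :
    IsArchFactorization w (arches w) (rem w) :=
  isArchFactorization_archesAux w.length w le_rfl

theorem List.length_le_of_prefix_of_toFinset_eq_univ {a p x : List α} (ha : a <+: x)
    (hp : p <+: x) (ha' : a.dropLast.toFinset ≠ Finset.univ) (hp' : p.toFinset = Finset.univ) :
    a.length ≤ p.length := by
  by_contra! hlt
  refine ha' (toFinset_eq_univ_of_subset (prefix_of_prefix_length_le hp ?_ ?_).subset hp')
  · exact (dropLast_prefix a).trans ha
  · rw [length_dropLast]
    omega

namespace IsArchFactorization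

variable {w : List α} {l : List (List α)} {r : List α}

theorem toFinset_rem_ne_univ (h : IsArchFactorization w l r) : r.toFinset ≠ Finset.univ := by
  induction h with
  | nil hr => exact hr
  | cons _ _ _ ih => exact ih

theorem rem_suffix (h : IsArchFactorization w l r) : r <:+ w := by
  induction h with
  | nil => exact suffix_rfl
  | cons _ _ _ ih => exact ih.trans (suffix_append _ _)

theorem append {y : List α} {l' : List (List α)} {r' : List α} (h : IsArchFactorization w l r)
    (h' : IsArchFactorization (r ++ y) l' r') : IsArchFactorization (w ++ y) (l ++ l') r' := by
  induction h with
  | nil => exact h'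
  | cons ha ha' _ ih =>
    rw [append_assoc]
    exact .cons ha ha' (ih h')

theorem isUniversal (h : IsArchFactorization w l r) : IsUniversal l.length w := by
  induction h with
  | nil => rintro _ hu; rw [length_eq_zero_iff.mp hu]; exact nil_sublist _
  | cons ha _ _ ih =>
    rintro (_ | ⟨c, u⟩) hu
    · exact nil_sublist _
    · exact (singleton_sublist.2 (mem_toFinset.1 (ha ▸ Finset.mem_univ c))).append
        (ih u (by simpa using hu))

theorem not_isUniversal (h : IsArchFactorization w l r) : ¬ IsUniversal (l.length + 1) w := by
  induction h with
  | nil hr =>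
    obtain ⟨b, hb⟩ := not_forall.mp (mt Finset.eq_univ_iff_forall.mpr hr)
    exact fun hu => hb (mem_toFinset.2 (singleton_sublist.1 (hu [b] rfl)))
  | @cons a _ _ _ ha ha' _ ih =>
    intro hu
    refine ih fun u hlen => ?_
    have hne : a ≠ [] := by
      rintro rfl
      exact ha' ha
    -- the last letter `x` of the arch occurs in it only at the end
    set x := a.getLast hne
    have hx : x ∉ a.dropLast := fun hx => ha' <| toFinset_eq_univ_of_subset
      (fun c hc => by
        rw [← dropLast_concat_getLast hne, mem_append, mem_singleton] at hc
        exact hc.elim id (· ▸ hx)) ha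
    have hsub := hu (x :: u) (by simp [hlen])
    rw [← dropLast_concat_getLast hne, append_assoc, singleton_append] at hsub
    exact cons_sublist_cons.mp (cons_sublist_of_cons_sublist_append hx hsub)

theorem univIndex_eq (h : IsArchFactorization w l r) : univIndex w = l.length := by
  have hset : {k | IsUniversal k w} = Set.Iic l.length := by
    ext k
    exact ⟨fun hk => Set.mem_Iic.2 <| not_lt.mp fun hlt => h.not_isUniversal (hk.mono hlt),
      fun hk => h.isUniversal.mono hk⟩
  rw [univIndex, hset, csSup_Iic]

theorem mono_suffix {x : List α} {l' : List (List α)} {r' : List α}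
    (h : IsArchFactorization w l r) (h' : IsArchFactorization x l' r') (hwx : w <:+ x) :
    l.length ≤ l'.length ∧ (l.length = l'.length → r <:+ r') := by
  induction h' generalizing w l r with
  | nil hr' =>
    cases h with
    | nil => exact ⟨le_rfl, fun _ => hwx⟩
    | cons ha => exact absurd (toFinset_eq_univ_of_subset
        ((sublist_append_left _ _).trans hwx.sublist).subset ha) hr'
  | @cons a' v' _ _ _ hmin' _ ih =>
    cases h with
    | nil => exact ⟨Nat.zero_le _, fun h => absurd h.symm (Nat.succ_ne_zero _)⟩
    | @cons a v _ _ ha _ h =>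
      obtain ⟨z, hz⟩ := hwx
      -- `z ++ a` contains every letter, so the first arch `a'` of `x` ends no later than it
      have hlen : a'.length ≤ (z ++ a).length :=
        length_le_of_prefix_of_toFinset_eq_univ (prefix_append a' v')
          ⟨v, by rw [append_assoc, hz]⟩ hmin'
          (toFinset_eq_univ_of_subset (subset_append_right _ _) ha)
      have hvv' : v <:+ v' := by
        refine suffix_of_suffix_length_le ⟨z ++ a, by rw [append_assoc, hz]⟩
          (suffix_append a' v') ?_
        have := congrArg length hz
        simp only [length_append] at this hlen
        omega
      obtain ⟨hle, hsuf⟩ := ih h hvv'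
      exact ⟨Nat.succ_le_succ hle, fun he => hsuf (Nat.succ.inj he)⟩

theorem rem_eq [Nonempty α] (h : IsArchFactorization w l r) : rem w = r := by
  have h' := isArchFactorization_arches w
  obtain ⟨hle, hsuf⟩ := h'.mono_suffix h suffix_rfl
  obtain ⟨hle', hsuf'⟩ := h.mono_suffix h' suffix_rfl
  have hlen := hle.antisymm hle'
  exact (hsuf hlen).eq_of_length_le (hsuf' hlen.symm).length_le

end IsArchFactorization

end ArchFactorization

section Remainder

variable [Fintype α] [DecidableEq α] [Nonempty α]

theorem rem_append (x y : List α) : rem (x ++ y) = rem (rem x ++ y) :=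
  ((isArchFactorization_arches x).append (isArchFactorization_arches (rem x ++ y))).rem_eq

theorem univIndex_append (x y : List α) :
    univIndex (x ++ y) = univIndex x + univIndex (rem x ++ y) := by
  rw [((isArchFactorization_arches x).append (isArchFactorization_arches _)).univIndex_eq,
    length_append, (isArchFactorization_arches x).univIndex_eq,
    (isArchFactorization_arches _).univIndex_eq]

theorem rem_suffix_rem_of_suffix {u v : List α} (huv : u <:+ v)
    (hι : univIndex u = univIndex v) : rem u <:+ rem v := by
  have hu := isArchFactorization_arches u
  have hv := isArchFactorization_arches v
  rw [hu.univIndex_eq, hv.univIndex_eq] at hι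
  exact (hu.mono_suffix hv huv).2 hι

theorem toFinset_eq_univ_of_univIndex_pos {w : List α} (hw : 0 < univIndex w) :
    w.toFinset = Finset.univ := by
  have h := (isArchFactorization_arches w).isUniversal
  rw [← (isArchFactorization_arches w).univIndex_eq] at h
  exact h.toFinset_eq_univ hw

end Remainder

theorem wpow_succ (w : List α) (s : ℕ) : wpow w (s + 1) = wpow w s ++ w := by
  simp [wpow, replicate_succ']

section Powers

variable [Fintype α] [DecidableEq α] [Nonempty α] {w : List α}

theorem rem_wpow_suffix (hw : w.toFinset = Finset.univ) (s : ℕ) : rem (wpow w s) <:+ w := by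
  cases s with
  | zero => exact nil_suffix
  | succ s =>
    have h := isArchFactorization_arches (wpow w (s + 1))
    refine suffix_of_suffix_length_le h.rem_suffix (wpow_succ w s ▸ suffix_append _ w) ?_
    -- otherwise `w` would be a suffix of the remainder, which misses a letter
    by_contra! hlt
    exact h.toFinset_rem_ne_univ (toFinset_eq_univ_of_subset (suffix_of_suffix_length_le
      (wpow_succ w s ▸ suffix_append _ w) h.rem_suffix hlt.le).subset hw)

theorem univIndex_wpow_sub_univIndex_wpow_pred (w : List α) {s : ℕ} (hs : 1 ≤ s) :
    univIndex (wpow w s) - univIndex (wpow w (s - 1)) =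
      univIndex (rem (wpow w (s - 1)) ++ w) := by
  obtain ⟨t, rfl⟩ : ∃ t, s = t + 1 := ⟨s - 1, by omega⟩
  rw [Nat.add_sub_cancel, wpow_succ, univIndex_append, Nat.add_sub_cancel_left]

theorem exists_rem_wpow_eventually_const (hw : w.toFinset = Finset.univ) {t₀ : ℕ}
    (hι : ∀ s, t₀ ≤ s → univIndex (rem (wpow w s) ++ w) = univIndex (rem (wpow w t₀) ++ w)) :
    ∃ s₁, ∀ s, s₁ ≤ s → rem (wpow w s) = rem (wpow w s₁) := by
  have hsuf := rem_wpow_suffix hw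
  -- on the tail, `r ↦ rem (r ++ w)` is monotone for the suffix order, i.e. for lengths
  have hstep (s s' : ℕ) (hs : t₀ ≤ s) (hs' : t₀ ≤ s')
      (hle : (rem (wpow w s)).length ≤ (rem (wpow w s')).length) :
      (rem (wpow w (s + 1))).length ≤ (rem (wpow w (s' + 1))).length := by
    obtain ⟨z, hz⟩ := suffix_of_suffix_length_le (hsuf s) (hsuf s') hle
    rw [wpow_succ, wpow_succ, rem_append, rem_append (wpow w s')]
    exact (rem_suffix_rem_of_suffix ⟨z, by rw [← append_assoc, hz]⟩
      (by rw [hι s hs, hι s' hs'])).length_le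
  obtain ⟨s₁, hs₁⟩ := Nat.exists_eventually_const_of_le_imp_le_succ
    (fun s => (hsuf s).length_le) hstep
  exact ⟨s₁, fun s hs => (suffix_of_suffix_length_le (hsuf s) (hsuf s₁)
    (hs₁ s hs).le).eq_of_length (hs₁ s hs)⟩

end Powers

theorem rem_eventually_const_iff_growth_eventually_const [Fintype α] [DecidableEq α]
    (w : List α) (hw : 1 ≤ univIndex w) :
    (∃ s₀ : ℕ, ∀ s : ℕ, s₀ ≤ s → rem (wpow w s) = rem (wpow w s₀)) ↔
      (∃ s₀ : ℕ, 1 ≤ s₀ ∧ ∀ s : ℕ, s₀ ≤ s →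
        univIndex (wpow w s) - univIndex (wpow w (s - 1)) =
          univIndex (wpow w s₀) - univIndex (wpow w (s₀ - 1))) := by
  have : Nonempty α := nonempty_of_univIndex_pos hw
  constructor
  · rintro ⟨s₀, hrem⟩
    refine ⟨s₀ + 1, by omega, fun s hs => ?_⟩
    rw [univIndex_wpow_sub_univIndex_wpow_pred w (by omega),
      univIndex_wpow_sub_univIndex_wpow_pred w (by omega), hrem (s - 1) (by omega),
      Nat.add_sub_cancel]
  · rintro ⟨s₀, hs₀, hgrowth⟩
    refine exists_rem_wpow_eventually_const (toFinset_eq_univ_of_univIndex_pos hw)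
      (t₀ := s₀ - 1) fun s hs => ?_
    have h := hgrowth (s + 1) (by omega)
    rwa [univIndex_wpow_sub_univIndex_wpow_pred w (Nat.le_add_left 1 s),
      univIndex_wpow_sub_univIndex_wpow_pred w hs₀, Nat.add_sub_cancel] at h
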